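/- arXiv:1012.1174 — 2 statements merged into one kernel-verified Lean document; each statement's English description precedes it below -/
import Mathlib

section
/- Girard's translation: define A* for intuitionistic formulas by: (A_at)* = A_at, ⊥* = 0, (A ∧ B)* = A* & B*, (A ∨ B)* = !A* ⊕ !B*, (A → B)* = !A* ⊸ B*, (∀x A)* = ∀x A*, (∃x A)* = ∃x !A*. Then if Γ ⊢ A is derivable in intuitionistic first-order logic, the sequent !Γ* ⊢ A* is derivable in intuitionistic linear logic ILL. -/
inductive IFml (D : Type) : Type where
  | atom : ℕ → List D → IFml D
  | bot : IFml D
  | and : IFml D → IFml D → IFml D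
  | or : IFml D → IFml D → IFml D
  | imp : IFml D → IFml D → IFml D
  | uni : (D → IFml D) → IFml D
  | exi : (D → IFml D) → IFml D

inductive LFml (D : Type) : Type where
  | atom : ℕ → List D → LFml D
  | zero : LFml D
  | tensor : LFml D → LFml D → LFml D
  | limp : LFml D → LFml D → LFml D
  | wth : LFml D → LFml D → LFml D
  | oplus : LFml D → LFml D → LFml D
  | bang : LFml D → LFml D
  | uni : (D → LFml D) → LFml D
  | exi : (D → LFml D) → LFml D

inductive Deriv {D : Type} : List (LFml D) → LFml D → Prop where
  | id : ∀ (A : LFml D), Deriv [A] A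
  | exch : ∀ {Γ Δ : List (LFml D)} {A : LFml D}, List.Perm Γ Δ → Deriv Γ A → Deriv Δ A
  | cut : ∀ {Γ Δ : List (LFml D)} {A B : LFml D}, Deriv Γ A → Deriv (A :: Δ) B → Deriv (Γ ++ Δ) B
  | zeroL : ∀ (Γ : List (LFml D)) (A : LFml D), Deriv (LFml.zero :: Γ) A
  | tensorR : ∀ {Γ Δ : List (LFml D)} {A B : LFml D}, Deriv Γ A → Deriv Δ B → Deriv (Γ ++ Δ) (LFml.tensor A B)
  | tensorL : ∀ {Γ : List (LFml D)} {A B C : LFml D}, Deriv (A :: B :: Γ) C → Deriv (LFml.tensor A B :: Γ) C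
  | limpR : ∀ {Γ : List (LFml D)} {A B : LFml D}, Deriv (A :: Γ) B → Deriv Γ (LFml.limp A B)
  | limpL : ∀ {Γ Δ : List (LFml D)} {A B C : LFml D}, Deriv Γ A → Deriv (B :: Δ) C → Deriv (LFml.limp A B :: (Γ ++ Δ)) C
  | withR : ∀ {Γ : List (LFml D)} {A B : LFml D}, Deriv Γ A → Deriv Γ B → Deriv Γ (LFml.wth A B)
  | withL₁ : ∀ {Γ : List (LFml D)} {A B C : LFml D}, Deriv (A :: Γ) C → Deriv (LFml.wth A B :: Γ) C
  | withL₂ : ∀ {Γ : List (LFml D)} {A B C : LFml D}, Deriv (B :: Γ) C → Deriv (LFml.wth A B :: Γ) C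
  | oplusR₁ : ∀ {Γ : List (LFml D)} {A B : LFml D}, Deriv Γ A → Deriv Γ (LFml.oplus A B)
  | oplusR₂ : ∀ {Γ : List (LFml D)} {A B : LFml D}, Deriv Γ B → Deriv Γ (LFml.oplus A B)
  | oplusL : ∀ {Γ : List (LFml D)} {A B C : LFml D}, Deriv (A :: Γ) C → Deriv (B :: Γ) C → Deriv (LFml.oplus A B :: Γ) C
  | contr : ∀ {Γ : List (LFml D)} {A B : LFml D}, Deriv (LFml.bang A :: LFml.bang A :: Γ) B → Deriv (LFml.bang A :: Γ) B
  | weak : ∀ {Γ : List (LFml D)} {A B : LFml D}, Deriv Γ B → Deriv (LFml.bang A :: Γ) B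
  | bangR : ∀ {Γ : List (LFml D)} {A : LFml D}, Deriv (Γ.map LFml.bang) A → Deriv (Γ.map LFml.bang) (LFml.bang A)
  | bangL : ∀ {Γ : List (LFml D)} {A B : LFml D}, Deriv (A :: Γ) B → Deriv (LFml.bang A :: Γ) B
  | uniR : ∀ {Γ : List (LFml D)} (A : D → LFml D), (∀ d, Deriv Γ (A d)) → Deriv Γ (LFml.uni A)
  | uniL : ∀ {Γ : List (LFml D)} {B : LFml D} (A : D → LFml D) (t : D), Deriv (A t :: Γ) B → Deriv (LFml.uni A :: Γ) B
  | exiR : ∀ {Γ : List (LFml D)} (A : D → LFml D) (t : D), Deriv Γ (A t) → Deriv Γ (LFml.exi A)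
  | exiL : ∀ {Γ : List (LFml D)} {B : LFml D} (A : D → LFml D), (∀ d, Deriv (A d :: Γ) B) → Deriv (LFml.exi A :: Γ) B

def biimp {D : Type} (A B : LFml D) : LFml D := LFml.wth (LFml.limp A B) (LFml.limp B A)

/-- Girard's translation of intuitionistic logic into intuitionistic linear logic. -/
def star {D : Type} : IFml D → LFml D
  | .atom n v => LFml.atom n v
  | .bot => LFml.zero
  | .and A B => LFml.wth (star A) (star B)
  | .or A B => LFml.oplus (LFml.bang (star A)) (LFml.bang (star B))
  | .imp A B => LFml.limp (LFml.bang (star A)) (star B)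
  | .uni A => LFml.uni (fun d => star (A d))
  | .exi A => LFml.exi (fun d => LFml.bang (star (A d)))

/-- Intuitionistic first-order logic (sequent calculus). -/
inductive IDeriv {D : Type} : List (IFml D) → IFml D → Prop where
  | id : ∀ (A : IFml D), IDeriv [A] A
  | exch : ∀ {Γ Δ : List (IFml D)} {A : IFml D}, List.Perm Γ Δ → IDeriv Γ A → IDeriv Δ A
  | cut : ∀ {Γ Δ : List (IFml D)} {A B : IFml D}, IDeriv Γ A → IDeriv (A :: Δ) B → IDeriv (Γ ++ Δ) B
  | weak : ∀ {Γ : List (IFml D)} {B : IFml D} (A : IFml D), IDeriv Γ B → IDeriv (A :: Γ) B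
  | contr : ∀ {Γ : List (IFml D)} {A B : IFml D}, IDeriv (A :: A :: Γ) B → IDeriv (A :: Γ) B
  | botL : ∀ (Γ : List (IFml D)) (A : IFml D), IDeriv (IFml.bot :: Γ) A
  | andR : ∀ {Γ : List (IFml D)} {A B : IFml D}, IDeriv Γ A → IDeriv Γ B → IDeriv Γ (IFml.and A B)
  | andL₁ : ∀ {Γ : List (IFml D)} {A B C : IFml D}, IDeriv (A :: Γ) C → IDeriv (IFml.and A B :: Γ) C
  | andL₂ : ∀ {Γ : List (IFml D)} {A B C : IFml D}, IDeriv (B :: Γ) C → IDeriv (IFml.and A B :: Γ) C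
  | orR₁ : ∀ {Γ : List (IFml D)} {A B : IFml D}, IDeriv Γ A → IDeriv Γ (IFml.or A B)
  | orR₂ : ∀ {Γ : List (IFml D)} {A B : IFml D}, IDeriv Γ B → IDeriv Γ (IFml.or A B)
  | orL : ∀ {Γ : List (IFml D)} {A B C : IFml D}, IDeriv (A :: Γ) C → IDeriv (B :: Γ) C → IDeriv (IFml.or A B :: Γ) C
  | impR : ∀ {Γ : List (IFml D)} {A B : IFml D}, IDeriv (A :: Γ) B → IDeriv Γ (IFml.imp A B)
  | impL : ∀ {Γ Δ : List (IFml D)} {A B C : IFml D}, IDeriv Γ A → IDeriv (B :: Δ) C → IDeriv (IFml.imp A B :: (Γ ++ Δ)) C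
  | uniR : ∀ {Γ : List (IFml D)} (A : D → IFml D), (∀ d, IDeriv Γ (A d)) → IDeriv Γ (IFml.uni A)
  | uniL : ∀ {Γ : List (IFml D)} {B : IFml D} (A : D → IFml D) (t : D), IDeriv (A t :: Γ) B → IDeriv (IFml.uni A :: Γ) B
  | exiR : ∀ {Γ : List (IFml D)} (A : D → IFml D) (t : D), IDeriv Γ (A t) → IDeriv Γ (IFml.exi A)
  | exiL : ∀ {Γ : List (IFml D)} {B : IFml D} (A : D → IFml D), (∀ d, IDeriv (A d :: Γ) B) → IDeriv (IFml.exi A :: Γ) B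

/-!
Every formula of a translated context `!Γ*` is banged, so the promotion rule `!R` applies to any
sequent `!Γ* ⊢ B`. This is what lets `!` absorb the structural rules of intuitionistic logic and the
sharing of contexts in its additive rules; each logical rule of intuitionistic logic is then matched
by the corresponding linear rule, with dereliction or promotion inserted where a `!` appears or
disappears.
-/

namespace Deriv

variable {D : Type}

theorem bangR_map {α : Type} (f : α → LFml D) {Γ : List α} {A : LFml D}
    (h : Deriv (Γ.map fun B => .bang (f B)) A) :
    Deriv (Γ.map fun B => .bang (f B)) (.bang A) := by
  have hmap : (Γ.map fun B => LFml.bang (f B)) = (Γ.map f).map LFml.bang := List.map_map.symm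
  rw [hmap] at h ⊢
  exact bangR h

theorem bang_mono {A B : LFml D} (h : Deriv [A] B) : Deriv [.bang A] (.bang B) :=
  bangR (Γ := [A]) (bangL h)

theorem cut_bang {Δ : List (LFml D)} {A B C : LFml D} (hAB : Deriv [A] B)
    (h : Deriv (.bang B :: Δ) C) : Deriv (.bang A :: Δ) C :=
  cut (bang_mono hAB) h

end Deriv

/-- if Γ ⊢ A in intuitionistic first-order logic, then !Γ* ⊢ A* in ILL. -/
theorem stmt8 {D : Type} {Γ : List (IFml D)} {A : IFml D} (h : IDeriv Γ A) :
    Deriv (Γ.map (fun B => LFml.bang (star B))) (star A) := by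
  induction h with
  | id A => exact Deriv.bangL (Deriv.id _)
  | exch hperm _ ih => exact Deriv.exch (hperm.map _) ih
  | cut _ _ ihA ihB =>
    rw [List.map_append]
    exact Deriv.cut (Deriv.bangR_map star ihA) ihB
  | weak _ _ ih => exact Deriv.weak ih
  | contr _ ih => exact Deriv.contr ih
  | botL => exact Deriv.bangL (Deriv.zeroL _ _)
  | andR _ _ ihA ihB => exact Deriv.withR ihA ihB
  | andL₁ _ ih => exact Deriv.cut_bang (Deriv.withL₁ (Deriv.id _)) ih
  | andL₂ _ ih => exact Deriv.cut_bang (Deriv.withL₂ (Deriv.id _)) ih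
  | orR₁ _ ih => exact Deriv.oplusR₁ (Deriv.bangR_map star ih)
  | orR₂ _ ih => exact Deriv.oplusR₂ (Deriv.bangR_map star ih)
  | orL _ _ ihA ihB => exact Deriv.bangL (Deriv.oplusL ihA ihB)
  | impR _ ih => exact Deriv.limpR ih
  | @impL Γ Δ A B _ _ _ ihA ihC =>
    have hB : Deriv ((IFml.imp A B :: Γ).map fun X => .bang (star X)) (star B) := by
      have := Deriv.limpL (Δ := []) (Deriv.bangR_map star ihA) (Deriv.id (star B))
      rw [List.append_nil] at this
      exact Deriv.bangL this
    rw [List.map_cons, List.map_append]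
    exact Deriv.cut (Deriv.bangR_map star hB) ihC
  | uniR _ _ ih => exact Deriv.uniR _ ih
  | uniL _ t _ ih => exact Deriv.cut_bang (Deriv.uniL _ t (Deriv.id _)) ih
  | exiR _ t _ ih => exact Deriv.exiR _ t (Deriv.bangR_map star ih)
  | exiL _ _ ih => exact Deriv.bangL (Deriv.exiL _ ih)
end

section
/- Define the second translation A° of intuitionistic formulas into linear logic by: (A_at)° = !A_at (for A_at ≢ ⊥), ⊥° = 0, (A ∧ B)° = A° ⊗ B°, (A ∨ B)° = A° ⊕ B°, (A → B)° = !(A° ⊸ B°), (∀x A)° = !∀x A°, (∃x A)° = ∃x A°. Then for every intuitionistic formula A, the equivalence A° ⊸⊸ !A* is derivable in intuitionistic linear logic, where A* is Girard's translation. -/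
/-- The second translation ° of intuitionistic logic into intuitionistic linear logic. -/
def circ {D : Type} : IFml D → LFml D
  | .atom n v => LFml.bang (LFml.atom n v)
  | .bot => LFml.zero
  | .and A B => LFml.tensor (circ A) (circ B)
  | .or A B => LFml.oplus (circ A) (circ B)
  | .imp A B => LFml.bang (LFml.limp (circ A) (circ B))
  | .uni A => LFml.bang (LFml.uni (fun d => circ (A d)))
  | .exi A => LFml.exi (fun d => circ (A d))


section Helpers
open LFml Deriv

variable {D : Type}

private lemma cut1 {A B C : LFml D} (h1 : Deriv [A] B) (h2 : Deriv [B] C) : Deriv [A] C :=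
  Deriv.cut (Δ := []) h1 h2

private lemma swap2 {A B C : LFml D} (h : Deriv [A, B] C) : Deriv [B, A] C :=
  Deriv.exch (List.Perm.swap _ _ _) h

private lemma bangMono {A B : LFml D} (h : Deriv [A] B) : Deriv [bang A] (bang B) :=
  Deriv.bangR (Γ := [A]) (Deriv.bangL h)

private lemma tensorCongr {A A' B B' : LFml D} (h1 : Deriv [A] A') (h2 : Deriv [B] B') :
    Deriv [tensor A B] (tensor A' B') :=
  Deriv.tensorL (Deriv.tensorR h1 h2)

private lemma oplusCongr {A A' B B' : LFml D} (h1 : Deriv [A] A') (h2 : Deriv [B] B') :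
    Deriv [oplus A B] (oplus A' B') :=
  Deriv.oplusL (Deriv.oplusR₁ h1) (Deriv.oplusR₂ h2)

private lemma limpCongr {A A' B B' : LFml D} (h1 : Deriv [A'] A) (h2 : Deriv [B] B') :
    Deriv [limp A B] (limp A' B') :=
  Deriv.limpR (swap2 (Deriv.limpL (Γ := [A']) (Δ := []) h1 h2))

private lemma uniCongr {A B : D → LFml D} (h : ∀ d, Deriv [A d] (B d)) :
    Deriv [uni A] (uni B) :=
  Deriv.uniR B (fun d => Deriv.uniL A d (h d))

private lemma exiCongr {A B : D → LFml D} (h : ∀ d, Deriv [A d] (B d)) :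
    Deriv [exi A] (exi B) :=
  Deriv.exiL A (fun d => Deriv.exiR B d (h d))

private lemma biimpI {A B : LFml D} (h1 : Deriv [A] B) (h2 : Deriv [B] A) :
    Deriv [] (biimp A B) :=
  Deriv.withR (Deriv.limpR h1) (Deriv.limpR h2)

private lemma biimpE1 {A B : LFml D} (h : Deriv [] (biimp A B)) : Deriv [A] B :=
  Deriv.cut (Γ := []) (Δ := [A]) h
    (Deriv.withL₁ (Deriv.limpL (Γ := [A]) (Δ := []) (Deriv.id A) (Deriv.id B)))

private lemma biimpE2 {A B : LFml D} (h : Deriv [] (biimp A B)) : Deriv [B] A :=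
  Deriv.cut (Γ := []) (Δ := [B]) h
    (Deriv.withL₂ (Deriv.limpL (Γ := [B]) (Δ := []) (Deriv.id B) (Deriv.id A)))

private lemma L1 {X Y : LFml D} : Deriv [tensor (bang X) (bang Y)] (bang (wth X Y)) :=
  Deriv.tensorL (Deriv.bangR (Γ := [X, Y])
    (Deriv.withR (swap2 (Deriv.weak (Deriv.bangL (Deriv.id X))))
      (Deriv.weak (Deriv.bangL (Deriv.id Y)))))

private lemma L1' {X Y : LFml D} : Deriv [bang (wth X Y)] (tensor (bang X) (bang Y)) :=
  Deriv.contr (Deriv.tensorR (Γ := [bang (wth X Y)]) (Δ := [bang (wth X Y)])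
    (Deriv.bangR (Γ := [wth X Y]) (Deriv.bangL (Deriv.withL₁ (Deriv.id X))))
    (Deriv.bangR (Γ := [wth X Y]) (Deriv.bangL (Deriv.withL₂ (Deriv.id Y)))))

private lemma L2 {X Y : LFml D} :
    Deriv [bang (limp (bang X) (bang Y))] (bang (limp (bang X) Y)) :=
  bangMono (limpCongr (Deriv.id _) (Deriv.bangL (Deriv.id Y)))

private lemma L2' {X Y : LFml D} :
    Deriv [bang (limp (bang X) Y)] (bang (limp (bang X) (bang Y))) :=
  Deriv.bangR (Γ := [limp (bang X) Y])
    (Deriv.limpR (Deriv.bangR (Γ := [X, limp (bang X) Y])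
      (swap2 (Deriv.bangL (Deriv.limpL (Γ := [bang X]) (Δ := [])
        (Deriv.id (bang X)) (Deriv.id Y))))))

private lemma L3 {X : D → LFml D} :
    Deriv [bang (uni (fun d => bang (X d)))] (bang (uni X)) :=
  bangMono (uniCongr (fun _ => Deriv.bangL (Deriv.id _)))

private lemma L3' {X : D → LFml D} :
    Deriv [bang (uni X)] (bang (uni (fun d => bang (X d)))) :=
  Deriv.bangR (Γ := [uni X])
    (Deriv.uniR _ (fun d => Deriv.bangR (Γ := [uni X])
      (Deriv.bangL (Deriv.uniL X d (Deriv.id (X d))))))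

private lemma L4 {X Y : LFml D} :
    Deriv [oplus (bang X) (bang Y)] (bang (oplus (bang X) (bang Y))) :=
  Deriv.oplusL (Deriv.bangR (Γ := [X]) (Deriv.oplusR₁ (Deriv.id _)))
    (Deriv.bangR (Γ := [Y]) (Deriv.oplusR₂ (Deriv.id _)))

private lemma L5 {X : D → LFml D} :
    Deriv [exi (fun d => bang (X d))] (bang (exi (fun d => bang (X d)))) :=
  Deriv.exiL _ (fun d => Deriv.bangR (Γ := [X d]) (Deriv.exiR _ d (Deriv.id _)))

end Helpers

/-- A° ⊸⊸ !A* is derivable in ILL for every intuitionistic formula A. -/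
theorem stmt9 {D : Type} (A : IFml D) :
    Deriv [] (biimp (circ A) (LFml.bang (star A))) := by
  induction A with
  | atom n v => exact biimpI (Deriv.id _) (Deriv.id _)
  | bot => exact biimpI (Deriv.zeroL [] _) (Deriv.bangL (Deriv.zeroL [] _))
  | and A B ihA ihB =>
    exact biimpI
      (cut1 (tensorCongr (biimpE1 ihA) (biimpE1 ihB)) L1)
      (cut1 L1' (tensorCongr (biimpE2 ihA) (biimpE2 ihB)))
  | or A B ihA ihB =>
    exact biimpI
      (cut1 (oplusCongr (biimpE1 ihA) (biimpE1 ihB)) L4)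
      (cut1 (Deriv.bangL (Deriv.id _)) (oplusCongr (biimpE2 ihA) (biimpE2 ihB)))
  | imp A B ihA ihB =>
    exact biimpI
      (cut1 (bangMono (limpCongr (biimpE2 ihA) (biimpE1 ihB))) L2)
      (cut1 L2' (bangMono (limpCongr (biimpE1 ihA) (biimpE2 ihB))))
  | uni A ih =>
    exact biimpI
      (cut1 (bangMono (uniCongr (fun d => biimpE1 (ih d)))) L3)
      (cut1 L3' (bangMono (uniCongr (fun d => biimpE2 (ih d)))))
  | exi A ih =>
    exact biimpI
      (cut1 (exiCongr (fun d => biimpE1 (ih d))) L5)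
      (cut1 (Deriv.bangL (Deriv.id _)) (exiCongr (fun d => biimpE2 (ih d))))
end
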